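/- arXiv:2307.14186 — 4 statements merged into one kernel-verified Lean document; each statement's English description precedes it below -/
import Mathlib

section
/- Given a finite simple graph G = (V, E) with edge weights ω : E → ℚ≥0 and an integer k ≥ 1, construct a pilot-assignment instance with user set U = V, τ = k pilots, one dedicated AP per user (A(i) = {i}), and large-scale coefficients β_{ii} = 1, β_{im} = √(ω(i,m)/2) for adjacent m ≤ |V| with m ≠ i, and 0 otherwise. Then for every partition of V into k parts (equivalently, every feasible pilot assignment with the corresponding pilot classes), the pilot-assignment objective Σ_t Σ_{k,k' ∈ V_t, k ≠ k'} (Σ_{m ∈ A(k)} (β_{k'm}/β_{km})² + Σ_{m' ∈ A(k')} (β_{km'}/β_{k'm'})²) equals Σ_t Σ_{i,j ∈ V_t, i ≠ j over unordered pairs} ω(i,j), the Min-k-Partition objective value of the same partition. -/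
open Finset

namespace PilotAssignment

variable {V : Type*} [DecidableEq V] (G : SimpleGraph V) [DecidableRel G.Adj] (ω : V → V → ℚ)

/-- The large-scale coefficients of the reduction: user `i` is served by the dedicated AP `i`. -/
noncomputable def coeff (i m : V) : ℝ :=
  if m = i then 1 else if G.Adj i m then Real.sqrt ((ω i m : ℝ) / 2) else 0

lemma coeff_self (i : V) : coeff G ω i i = 1 := if_pos rfl

lemma coeff_sq_of_ne (hω0 : ∀ i j, 0 ≤ ω i j) (hωsupp : ∀ i j, ¬ G.Adj i j → ω i j = 0)
    {i m : V} (hne : m ≠ i) : coeff G ω i m ^ 2 = (ω i m : ℝ) / 2 := by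
  rw [coeff, if_neg hne]
  split_ifs with hadj
  · exact Real.sq_sqrt (by have := hω0 i m; positivity)
  · simp [hωsupp i m hadj]

lemma pair_term_eq (hω0 : ∀ i j, 0 ≤ ω i j) (hωsymm : ∀ i j, ω i j = ω j i)
    (hωsupp : ∀ i j, ¬ G.Adj i j → ω i j = 0) {i j : V} (hne : i ≠ j) :
    (coeff G ω j i / coeff G ω i i) ^ 2 + (coeff G ω i j / coeff G ω j j) ^ 2 = ω i j := by
  rw [coeff_self, coeff_self, div_one, div_one, coeff_sq_of_ne G ω hω0 hωsupp hne,
    coeff_sq_of_ne G ω hω0 hωsupp hne.symm, hωsymm j i]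
  ring

end PilotAssignment

theorem stmt_3_general (V : Type*) [Fintype V] [LinearOrder V]
    (G : SimpleGraph V) [DecidableRel G.Adj]
    (ω : V → V → ℚ) (hω0 : ∀ i j, 0 ≤ ω i j) (hωsymm : ∀ i j, ω i j = ω j i)
    (hωsupp : ∀ i j, ¬ G.Adj i j → ω i j = 0)
    (k : ℕ) (f : V → Fin k) :
    (let β : V → V → ℝ := fun i m =>
      if m = i then 1 else if G.Adj i m then Real.sqrt ((ω i m : ℝ) / 2) else 0
    ∑ p ∈ (univ : Finset (V × V)).filter (fun p => p.1 < p.2 ∧ f p.1 = f p.2),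
      ((β p.2 p.1 / β p.1 p.1) ^ 2 + (β p.1 p.2 / β p.2 p.2) ^ 2)) =
    ∑ p ∈ (univ : Finset (V × V)).filter (fun p => p.1 < p.2 ∧ f p.1 = f p.2),
      ((ω p.1 p.2 : ℝ)) :=
  sum_congr rfl fun _ hp =>
    PilotAssignment.pair_term_eq G ω hω0 hωsymm hωsupp (mem_filter.1 hp).2.1.ne

/-- In the reduction from Min-k-Partition to Pilot Assignment (one dedicated AP
per user, `β i i = 1`, `β i m = √(ω i m / 2)` for adjacent `m ≠ i`, `0`
otherwise), for every assignment of the vertices to `k` parts the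
pilot-assignment objective equals the Min-k-Partition objective. -/
theorem stmt_3 (V : Type*) [Fintype V] [LinearOrder V]
    (G : SimpleGraph V) [DecidableRel G.Adj]
    (ω : V → V → ℚ) (hω0 : ∀ i j, 0 ≤ ω i j) (hωsymm : ∀ i j, ω i j = ω j i)
    (hωsupp : ∀ i j, ¬ G.Adj i j → ω i j = 0)
    (k : ℕ) (hk : 1 ≤ k) (f : V → Fin k) :
    (let β : V → V → ℝ := fun i m =>
      if m = i then 1 else if G.Adj i m then Real.sqrt ((ω i m : ℝ) / 2) else 0
    ∑ p ∈ (univ : Finset (V × V)).filter (fun p => p.1 < p.2 ∧ f p.1 = f p.2),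
      ((β p.2 p.1 / β p.1 p.1) ^ 2 + (β p.1 p.2 / β p.2 p.2) ^ 2)) =
    ∑ p ∈ (univ : Finset (V × V)).filter (fun p => p.1 < p.2 ∧ f p.1 = f p.2),
      ((ω p.1 p.2 : ℝ)) :=
  stmt_3_general V G ω hω0 hωsymm hωsupp k f
end

section
/- With the construction of the previous statement (Min-k-Partition instance mapped to a pilot-assignment instance with one dedicated AP per user and β_{im} = √(ω(i,m)/2)), a partition of V into k nonempty parts is optimal for Min-k-Partition if and only if the corresponding feasible pilot assignment is optimal for the pilot-assignment instance. Hence Min-k-Partition reduces to Pilot Assignment preserving optimal values. -/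
/-!
With these gains the contamination `(β j i / β i i)² + (β i j / β j j)²` between two distinct
users equals `ω(j,i)/2 + ω(i,j)/2 = ω(i,j)`, so the two objectives agree on every assignment
and therefore have the same minimisers.
-/

open Finset

section Reduction

variable {V : Type*} [DecidableEq V] (G : SimpleGraph V) [DecidableRel G.Adj] (ω : V → V → ℚ)

/-- The large-scale fading coefficient `β i m` of the reduction: user `i` is served by its own
access point `m = i`, and reaches the access point of a neighbour `m` with gain `√(ω i m / 2)`. -/
noncomputable def reductionGain (i m : V) : ℝ :=
  if m = i then 1 else if G.Adj i m then Real.sqrt ((ω i m : ℝ) / 2) else 0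

lemma reductionGain_self (i : V) : reductionGain G ω i i = 1 := if_pos rfl

variable {G ω}

lemma sq_reductionGain_of_ne (hω0 : ∀ i j, 0 ≤ ω i j)
    (hωsupp : ∀ i j, ¬ G.Adj i j → ω i j = 0) {i m : V} (hmi : m ≠ i) :
    reductionGain G ω i m ^ 2 = (ω i m : ℝ) / 2 := by
  unfold reductionGain
  rw [if_neg hmi]
  split_ifs with hadj
  · exact Real.sq_sqrt (div_nonneg (by exact_mod_cast hω0 i m) zero_le_two)
  · simp [hωsupp i m hadj]

lemma pilotContamination_eq_weight (hω0 : ∀ i j, 0 ≤ ω i j) (hωsymm : ∀ i j, ω i j = ω j i)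
    (hωsupp : ∀ i j, ¬ G.Adj i j → ω i j = 0) {i j : V} (hij : i ≠ j) :
    (reductionGain G ω j i / reductionGain G ω i i) ^ 2
      + (reductionGain G ω i j / reductionGain G ω j j) ^ 2 = (ω i j : ℝ) := by
  rw [reductionGain_self, reductionGain_self, div_one, div_one,
    sq_reductionGain_of_ne hω0 hωsupp hij, sq_reductionGain_of_ne hω0 hωsupp hij.symm, hωsymm j i]
  ring

end Reduction

section Cost

variable {V ι : Type*} [Fintype V] [LinearOrder V] [DecidableEq ι]

def partitionCost (ω : V → V → ℚ) (g : V → ι) : ℝ :=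
  ∑ p ∈ (univ : Finset (V × V)).filter (fun p => p.1 < p.2 ∧ g p.1 = g p.2), (ω p.1 p.2 : ℝ)

noncomputable def pilotCost (β : V → V → ℝ) (g : V → ι) : ℝ :=
  ∑ p ∈ (univ : Finset (V × V)).filter (fun p => p.1 < p.2 ∧ g p.1 = g p.2),
    ((β p.2 p.1 / β p.1 p.1) ^ 2 + (β p.1 p.2 / β p.2 p.2) ^ 2)

variable {G : SimpleGraph V} [DecidableRel G.Adj] {ω : V → V → ℚ}

lemma pilotCost_reductionGain (hω0 : ∀ i j, 0 ≤ ω i j) (hωsymm : ∀ i j, ω i j = ω j i)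
    (hωsupp : ∀ i j, ¬ G.Adj i j → ω i j = 0) :
    pilotCost (ι := ι) (reductionGain G ω) = partitionCost ω :=
  funext fun _ => sum_congr rfl fun _ hp =>
    pilotContamination_eq_weight hω0 hωsymm hωsupp (mem_filter.1 hp).2.1.ne

end Cost

theorem stmt_4_general (V : Type*) [Fintype V] [LinearOrder V]
    (G : SimpleGraph V) [DecidableRel G.Adj]
    (ω : V → V → ℚ) (hω0 : ∀ i j, 0 ≤ ω i j) (hωsymm : ∀ i j, ω i j = ω j i)
    (hωsupp : ∀ i j, ¬ G.Adj i j → ω i j = 0)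
    (k : ℕ) (f : V → Fin k) :
    letI β : V → V → ℝ := fun i m =>
      if m = i then 1 else if G.Adj i m then Real.sqrt ((ω i m : ℝ) / 2) else 0
    letI mPA : (V → Fin k) → ℝ := fun g =>
      ∑ p ∈ (univ : Finset (V × V)).filter (fun p => p.1 < p.2 ∧ g p.1 = g p.2),
        ((β p.2 p.1 / β p.1 p.1) ^ 2 + (β p.1 p.2 / β p.2 p.2) ^ 2)
    letI mMkP : (V → Fin k) → ℝ := fun g =>
      ∑ p ∈ (univ : Finset (V × V)).filter (fun p => p.1 < p.2 ∧ g p.1 = g p.2),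
        ((ω p.1 p.2 : ℝ))
    ((∀ g : V → Fin k, Function.Surjective g → mMkP f ≤ mMkP g) ↔
     (∀ g : V → Fin k, Function.Surjective g → mPA f ≤ mPA g)) := by
  show (∀ g, _ → partitionCost ω f ≤ partitionCost ω g) ↔
    (∀ g, _ → pilotCost (reductionGain G ω) f ≤ pilotCost (reductionGain G ω) g)
  rw [pilotCost_reductionGain hω0 hωsymm hωsupp]

/-- With the reduction construction, a partition of `V` into `k` nonempty parts
(equivalently, a surjective assignment `f : V → Fin k`) is optimal for
Min-k-Partition iff the corresponding feasible pilot assignment is optimal for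
the constructed Pilot Assignment instance. -/
theorem stmt_4 (V : Type*) [Fintype V] [LinearOrder V]
    (G : SimpleGraph V) [DecidableRel G.Adj]
    (ω : V → V → ℚ) (hω0 : ∀ i j, 0 ≤ ω i j) (hωsymm : ∀ i j, ω i j = ω j i)
    (hωsupp : ∀ i j, ¬ G.Adj i j → ω i j = 0)
    (k : ℕ) (hk : 1 ≤ k) (f : V → Fin k) (hf : Function.Surjective f) :
    letI β : V → V → ℝ := fun i m =>
      if m = i then 1 else if G.Adj i m then Real.sqrt ((ω i m : ℝ) / 2) else 0
    letI mPA : (V → Fin k) → ℝ := fun g =>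
      ∑ p ∈ (univ : Finset (V × V)).filter (fun p => p.1 < p.2 ∧ g p.1 = g p.2),
        ((β p.2 p.1 / β p.1 p.1) ^ 2 + (β p.1 p.2 / β p.2 p.2) ^ 2)
    letI mMkP : (V → Fin k) → ℝ := fun g =>
      ∑ p ∈ (univ : Finset (V × V)).filter (fun p => p.1 < p.2 ∧ g p.1 = g p.2),
        ((ω p.1 p.2 : ℝ))
    ((∀ g : V → Fin k, Function.Surjective g → mMkP f ≤ mMkP g) ↔
     (∀ g : V → Fin k, Function.Surjective g → mPA f ≤ mPA g)) :=
  stmt_4_general V G ω hω0 hωsymm hωsupp k f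
end

section
/- In the reduction from Min-k-Partition to Pilot Assignment, if h is any feasible pilot assignment solving the constructed instance, and 𝒱 = {V_1,...,V_k} with V_t = {i : h(i) = t} is the induced partition, then the measure (objective value) of 𝒱 in Min-k-Partition equals the measure of h in Pilot Assignment; in particular the performance ratio of 𝒱 with respect to the Min-k-Partition instance equals the performance ratio of h with respect to the Pilot Assignment instance. Hence the reduction is approximation-preserving with α = 1. -/
/-!
With `β i i = 1` and `β i m = √(ω i m / 2)` on edges, the contamination that two vertices sharing
a pilot cause each other is `ω m i / 2 + ω i m / 2 = ω i m`, and it is `0 = ω i m` off the edges.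
So the Pilot Assignment objective and the Min-k-Partition objective are the same function of the
assignment; their infima coincide, and so do all performance ratios.
-/

open Finset

section PilotGain

variable {V : Type*} [DecidableEq V] (G : SimpleGraph V) [DecidableRel G.Adj] (ω : V → V → ℚ)

noncomputable def pilotGain (i m : V) : ℝ :=
  if m = i then 1 else if G.Adj i m then Real.sqrt ((ω i m : ℝ) / 2) else 0

variable {G ω}

@[simp]
theorem pilotGain_self (i : V) : pilotGain G ω i i = 1 := if_pos rfl

theorem sq_pilotGain_of_ne (hω0 : ∀ i j, 0 ≤ ω i j) (hωsupp : ∀ i j, ¬ G.Adj i j → ω i j = 0)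
    {i m : V} (hne : i ≠ m) : pilotGain G ω i m ^ 2 = ω i m / 2 := by
  rw [pilotGain, if_neg hne.symm]
  split_ifs with hadj
  · exact Real.sq_sqrt (div_nonneg (by exact_mod_cast hω0 i m) zero_le_two)
  · simp [hωsupp i m hadj]

theorem pilotContamination_eq (hω0 : ∀ i j, 0 ≤ ω i j) (hωsymm : ∀ i j, ω i j = ω j i)
    (hωsupp : ∀ i j, ¬ G.Adj i j → ω i j = 0) {i j : V} (hne : i ≠ j) :
    (pilotGain G ω j i / pilotGain G ω i i) ^ 2 + (pilotGain G ω i j / pilotGain G ω j j) ^ 2 =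
      ω i j := by
  rw [pilotGain_self, pilotGain_self, div_one, div_one, sq_pilotGain_of_ne hω0 hωsupp hne,
    sq_pilotGain_of_ne hω0 hωsupp hne.symm, hωsymm j i]
  ring

end PilotGain

theorem measure_and_ratio_eq_of_measure_eq {α : Type*} (feasible : α → Prop) {m₁ m₂ : α → ℝ}
    (hm : ∀ g, m₁ g = m₂ g) (h : α) :
    m₁ h = m₂ h ∧
    (0 < sInf {x | ∃ g, feasible g ∧ x = m₁ g} → 0 < sInf {x | ∃ g, feasible g ∧ x = m₂ g} →
      0 < m₁ h →
      max (m₁ h / sInf {x | ∃ g, feasible g ∧ x = m₁ g})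
          (sInf {x | ∃ g, feasible g ∧ x = m₁ g} / m₁ h) =
        max (m₂ h / sInf {x | ∃ g, feasible g ∧ x = m₂ g})
          (sInf {x | ∃ g, feasible g ∧ x = m₂ g} / m₂ h)) := by
  obtain rfl : m₁ = m₂ := funext hm
  exact ⟨rfl, fun _ _ _ => rfl⟩

theorem stmt_10_general (V : Type*) [Fintype V] [LinearOrder V]
    (G : SimpleGraph V) [DecidableRel G.Adj]
    (ω : V → V → ℚ) (hω0 : ∀ i j, 0 ≤ ω i j) (hωsymm : ∀ i j, ω i j = ω j i)
    (hωsupp : ∀ i j, ¬ G.Adj i j → ω i j = 0)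
    (k : ℕ) (h : V → Fin k) :
    letI β : V → V → ℝ := fun i m =>
      if m = i then 1 else if G.Adj i m then Real.sqrt ((ω i m : ℝ) / 2) else 0
    letI mPA : (V → Fin k) → ℝ := fun g =>
      ∑ p ∈ (univ : Finset (V × V)).filter (fun p => p.1 < p.2 ∧ g p.1 = g p.2),
        ((β p.2 p.1 / β p.1 p.1) ^ 2 + (β p.1 p.2 / β p.2 p.2) ^ 2)
    letI mMkP : (V → Fin k) → ℝ := fun g =>
      ∑ p ∈ (univ : Finset (V × V)).filter (fun p => p.1 < p.2 ∧ g p.1 = g p.2),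
        ((ω p.1 p.2 : ℝ))
    letI optPA : ℝ :=
      sInf {x : ℝ | ∃ g : V → Fin k, Function.Surjective g ∧ x = mPA g}
    letI optMkP : ℝ :=
      sInf {x : ℝ | ∃ g : V → Fin k, Function.Surjective g ∧ x = mMkP g}
    mMkP h = mPA h ∧
    (0 < optMkP → 0 < optPA → 0 < mMkP h →
      max (mMkP h / optMkP) (optMkP / mMkP h) =
        max (mPA h / optPA) (optPA / mPA h)) := by
  apply measure_and_ratio_eq_of_measure_eq Function.Surjective (fun g => ?_) h
  refine sum_congr rfl fun p hp => ?_
  exact (pilotContamination_eq hω0 hωsymm hωsupp (mem_filter.1 hp).2.1.ne).symm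

/-- In the reduction from Min-k-Partition to Pilot Assignment, any feasible
pilot assignment `h` and its induced partition have equal measures, and
(assuming the optimal values and the measure of `h` are positive) equal
performance ratios; hence the reduction is an AP-reduction with `α = 1`. -/
theorem stmt_10 (V : Type*) [Fintype V] [LinearOrder V]
    (G : SimpleGraph V) [DecidableRel G.Adj]
    (ω : V → V → ℚ) (hω0 : ∀ i j, 0 ≤ ω i j) (hωsymm : ∀ i j, ω i j = ω j i)
    (hωsupp : ∀ i j, ¬ G.Adj i j → ω i j = 0)
    (k : ℕ) (hk : 1 ≤ k) (h : V → Fin k) (hsurj : Function.Surjective h) :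
    letI β : V → V → ℝ := fun i m =>
      if m = i then 1 else if G.Adj i m then Real.sqrt ((ω i m : ℝ) / 2) else 0
    letI mPA : (V → Fin k) → ℝ := fun g =>
      ∑ p ∈ (univ : Finset (V × V)).filter (fun p => p.1 < p.2 ∧ g p.1 = g p.2),
        ((β p.2 p.1 / β p.1 p.1) ^ 2 + (β p.1 p.2 / β p.2 p.2) ^ 2)
    letI mMkP : (V → Fin k) → ℝ := fun g =>
      ∑ p ∈ (univ : Finset (V × V)).filter (fun p => p.1 < p.2 ∧ g p.1 = g p.2),
        ((ω p.1 p.2 : ℝ))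
    letI optPA : ℝ :=
      sInf {x : ℝ | ∃ g : V → Fin k, Function.Surjective g ∧ x = mPA g}
    letI optMkP : ℝ :=
      sInf {x : ℝ | ∃ g : V → Fin k, Function.Surjective g ∧ x = mMkP g}
    mMkP h = mPA h ∧
    (0 < optMkP → 0 < optPA → 0 < mMkP h →
      max (mMkP h / optMkP) (optMkP / mMkP h) =
        max (mPA h / optPA) (optPA / mPA h)) :=
  stmt_10_general V G ω hω0 hωsymm hωsupp k h
end

section
/- Two optimization problems whose instances are in measure-preserving bijective correspondence (instances map to instances, feasible solutions map bijectively to feasible solutions, and corresponding solutions have equal measure) have equal optimal values on corresponding instances, and any r-approximate solution maps to an r-approximate solution. In particular, Pilot Assignment and Min-τ-Partition restricted to complete graphs with symmetric nonnegative weights are approximation-equivalent with α = 1 in both directions. -/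
/-- If the feasible solutions of two minimization problems (on corresponding
instances) are in bijective, measure-preserving correspondence, then the
optimal values coincide and any `r`-approximate solution maps to an
`r`-approximate solution (AP-reduction with `α = 1` in both directions). -/
theorem stmt_11 (S₁ S₂ : Type*) (e : S₁ ≃ S₂) (m₁ : S₁ → ℝ) (m₂ : S₂ → ℝ)
    (hm : ∀ y : S₁, m₁ y = m₂ (e y)) :
    sInf (Set.range m₁) = sInf (Set.range m₂) ∧
    (∀ (r : ℝ) (y : S₁), m₁ y ≤ r * sInf (Set.range m₁) →
      m₂ (e y) ≤ r * sInf (Set.range m₂)) ∧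
    (∀ (r : ℝ) (z : S₂), m₂ z ≤ r * sInf (Set.range m₂) →
      m₁ (e.symm z) ≤ r * sInf (Set.range m₁)) := by
  have hrange : Set.range m₁ = Set.range m₂ := by
    rw [show m₁ = m₂ ∘ e from funext hm, EquivLike.range_comp]
  refine ⟨congrArg sInf hrange, fun r y h => ?_, fun r z h => ?_⟩
  · rwa [← hrange, ← hm]
  · rwa [hrange, hm, e.apply_symm_apply]
end
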